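/- Before any difficulty adjustment, selfish mining strictly loses revenue regardless of the attackers' Hashrates: in the N=2 selfish-mining model with γ1 = γ2 = 1/2 and θ1 = θ2 = 1/3, for all α1, α2 ∈ (0,1) with αh = 1 − α1 − α2 > max(α1, α2), Alice's absolute revenue in the first difficulty-adjustment period satisfies R1 < α1 (and by symmetry R2 < α2). -/
import Mathlib


/-- N=2 selfish-mining model: Alice's valid-block rate. -/
noncomputable def R1N2 (a1 a2 g1 g2 t1 t2 : ℝ) : ℝ :=
  let h := 1 - a1 - a2
  (2*a1^2*(1+h) + (a2+h)*a1*h*g1 + a1*a2*h + 4*a1^2*a2*(1+h) + 2*a1*a2*h^2*t1)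
    / (1 + a1 + a2 + a1*h + 2*a1*a2 + a2*h + 2*a1*a2*h)

/-- N=2 selfish-mining model: Bob's valid-block rate. -/
noncomputable def R2N2 (a1 a2 g1 g2 t1 t2 : ℝ) : ℝ :=
  let h := 1 - a1 - a2
  (2*a2^2*(1+h) + (a1+h)*h*a2*g2 + a1*a2*h + 4*a2^2*a1*(1+h) + 2*a1*a2*h^2*t2)
    / (1 + a1 + a2 + a1*h + 2*a1*a2 + a2*h + 2*a1*a2*h)

/-- N=2 selfish-mining model: Henry's valid-block rate. -/
noncomputable def RhN2 (a1 a2 g1 g2 t1 t2 : ℝ) : ℝ :=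
  let h := 1 - a1 - a2
  (h + a1*h^2*(2-g1) + a2*h^2*(2-g2) + 2*a1*a2*h^2*(2-t1-t2) + a1*a2*h*(2-g1-g2))
    / (1 + a1 + a2 + a1*h + 2*a1*a2 + a2*h + 2*a1*a2*h)

/-- N=2 model: Alice's relative revenue R_A. -/
noncomputable def RA2 (a1 a2 g1 g2 t1 t2 : ℝ) : ℝ :=
  R1N2 a1 a2 g1 g2 t1 t2 /
    (R1N2 a1 a2 g1 g2 t1 t2 + R2N2 a1 a2 g1 g2 t1 t2 + RhN2 a1 a2 g1 g2 t1 t2)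

/-- N=2 model: Bob's relative revenue R_B. -/
noncomputable def RB2 (a1 a2 g1 g2 t1 t2 : ℝ) : ℝ :=
  R2N2 a1 a2 g1 g2 t1 t2 /
    (R1N2 a1 a2 g1 g2 t1 t2 + R2N2 a1 a2 g1 g2 t1 t2 + RhN2 a1 a2 g1 g2 t1 t2)

/-- Before any difficulty adjustment, selfish mining strictly loses revenue:
in the N=2 model with γ1=γ2=1/2, θ1=θ2=1/3 and αh = 1-α1-α2 > max(α1,α2),
each attacker's absolute revenue in the first period is below his Hashrate. -/
theorem first_period_always_loses (a1 a2 : ℝ)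
    (ha1 : 0 < a1) (ha1' : a1 < 1) (ha2 : 0 < a2) (ha2' : a2 < 1)
    (hmax : max a1 a2 < 1 - a1 - a2) :
    R1N2 a1 a2 (1/2) (1/2) (1/3) (1/3) < a1 ∧
    R2N2 a1 a2 (1/2) (1/2) (1/3) (1/3) < a2 := by
  have h1 : a1 < 1 - a1 - a2 := lt_of_le_of_lt (le_max_left _ _) hmax
  have h2 : a2 < 1 - a1 - a2 := lt_of_le_of_lt (le_max_right _ _) hmax
  have hD : (0:ℝ) < 1 + a1 + a2 + a1*(1-a1-a2) + 2*a1*a2 + a2*(1-a1-a2) + 2*a1*a2*(1-a1-a2) := by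
    nlinarith [mul_pos ha1 ha2, mul_pos (mul_pos ha1 ha2) (sub_pos.mpr (by linarith : a1 + a2 < 1))]
  constructor
  · rw [R1N2, div_lt_iff₀ hD]
    nlinarith [mul_pos ha1 ha2, sq_nonneg (a1-a2), mul_pos (mul_pos ha1 ha2) (by linarith : (0:ℝ) < 1-a1-a2), mul_pos ha1 (by linarith : (0:ℝ) < 1-a1-a2), sq_nonneg (1-a1-a2), mul_pos (mul_pos ha1 ha1) ha2]
  · rw [R2N2, div_lt_iff₀ hD]
    nlinarith [mul_pos ha1 ha2, sq_nonneg (a1-a2), mul_pos (mul_pos ha1 ha2) (by linarith : (0:ℝ) < 1-a1-a2), mul_pos ha2 (by linarith : (0:ℝ) < 1-a1-a2), sq_nonneg (1-a1-a2), mul_pos (mul_pos ha2 ha2) ha1]
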